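/- Let U be a Hopf algebra over a field k with comultiplication Δ, counit ε, antipode S, and let K ∈ U be an invertible element with Δ(K) = K ⊗ K and S²(x) = K x K⁻¹ for all x ∈ U. Let B, B' ⊆ U be right coideal subalgebras, V a finite-dimensional B-module with action ρ_V, and W a B'-module with action ρ_W. Let Φ : U → Hom_k(W, V) be k-linear with Φ(b x b') = ρ_V(b) ∘ Φ(x) ∘ ρ_W(b') for all b ∈ B, x ∈ U, b' ∈ B', and let Ψ : U → Hom_k(V, W) be k-linear with Ψ(b' x b) = ρ_W(b') ∘ Ψ(x) ∘ ρ_V(b) for all b' ∈ B', x ∈ U, b ∈ B. Define Ξ(Φ, Ψ) : U → k by Ξ(Φ, Ψ)(x) = Σ tr_V( Φ(x₍₁₎) ∘ Ψ(S(x₍₂₎) · K) ). Then Ξ(Φ, Ψ) is a zonal spherical function for (B, B'): Ξ(Φ, Ψ)(b x b') = ε(b) · Ξ(Φ, Ψ)(x) · ε(b') for all b ∈ B, x ∈ U, b' ∈ B'. -/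

import Mathlib

open TensorProduct

/-- `B` is a right coideal subalgebra of the Hopf algebra `U`: `Δ(B) ⊆ B ⊗ U`. -/
def IsRightCoidealSubalgebra (k : Type*) {U : Type*} [CommSemiring k] [Semiring U]
    [Bialgebra k U] (B : Subalgebra k U) : Prop :=
  ∀ b ∈ B, Coalgebra.comul (R := k) b ∈
    LinearMap.range (LinearMap.rTensor U B.toSubmodule.subtype)

/-- The pairing `Ξ(Φ, Ψ)(x) = Σ tr_V( Φ(x₍₁₎) ∘ Ψ(S(x₍₂₎) · K) )`. -/
noncomputable def XiPairing {k U : Type*} [Field k] [Ring U] [HopfAlgebra k U]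
    {V W : Type*} [AddCommGroup V] [Module k V] [AddCommGroup W] [Module k W]
    (Φ : U →ₗ[k] (W →ₗ[k] V)) (Ψ : U →ₗ[k] (V →ₗ[k] W)) (K : U) : U →ₗ[k] k :=
  (LinearMap.trace k V) ∘ₗ
    (TensorProduct.lift (LinearMap.llcomp k V W V)) ∘ₗ
    (TensorProduct.map Φ
      (Ψ ∘ₗ (LinearMap.mulRight k K) ∘ₗ HopfAlgebra.antipode (R := k))) ∘ₗ
    Coalgebra.comul (R := k)

namespace XiAux

variable {R A : Type*} [CommSemiring R] [Semiring A]

section Conv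
variable [Bialgebra R A]

open Coalgebra

noncomputable def conv (f g : A ⊗[R] A →ₗ[R] A) : A ⊗[R] A →ₗ[R] A :=
  LinearMap.mul' R A ∘ₗ TensorProduct.map f g ∘ₗ
    (TensorProduct.tensorTensorTensorComm R A A A A).toLinearMap ∘ₗ
    TensorProduct.map (Coalgebra.comul) (Coalgebra.comul)

lemma conv_tmul {ι κ : Type*} (f g : A ⊗[R] A →ₗ[R] A) (a b : A)
    (ra : Coalgebra.Repr R a ι) (rb : Coalgebra.Repr R b κ) :
    conv f g (a ⊗ₜ[R] b) =
      ∑ i ∈ ra.index, ∑ p ∈ rb.index,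
        f (ra.left i ⊗ₜ[R] rb.left p) * g (ra.right i ⊗ₜ[R] rb.right p) := by
  simp only [conv, LinearMap.comp_apply, TensorProduct.map_tmul]
  rw [← ra.eq, ← rb.eq]
  simp [TensorProduct.sum_tmul, TensorProduct.tmul_sum, map_sum]
  exact Finset.sum_comm ..

noncomputable def convUnit : A ⊗[R] A →ₗ[R] A :=
  Algebra.linearMap R A ∘ₗ LinearMap.mul' R R ∘ₗ
    TensorProduct.map (Coalgebra.counit) (Coalgebra.counit)

lemma convUnit_tmul (a b : A) :
    convUnit (a ⊗ₜ[R] b) = (counit (R := R) a * counit (R := R) b) • (1 : A) := by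
  simp [convUnit, Algebra.algebraMap_eq_smul_one]

lemma sum_counit_right_smul {ι : Type*} {a : A} (ra : Coalgebra.Repr R a ι) :
    ∑ i ∈ ra.index, counit (R := R) (ra.right i) • ra.left i = a := by
  have h := congrArg (TensorProduct.rid R A) (Coalgebra.sum_tmul_counit_eq (R := R) ra)
  simp only [map_sum, TensorProduct.rid_tmul, one_smul] at h
  exact h

lemma sum_counit_left_smul {ι : Type*} {a : A} (ra : Coalgebra.Repr R a ι) :
    ∑ i ∈ ra.index, counit (R := R) (ra.left i) • ra.right i = a := by
  have h := congrArg (TensorProduct.lid R A) (Coalgebra.sum_counit_tmul_eq (R := R) ra)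
  simp only [map_sum, TensorProduct.lid_tmul, one_smul] at h
  exact h

lemma conv_unit_right (f : A ⊗[R] A →ₗ[R] A) : conv f convUnit = f := by
  apply TensorProduct.ext'
  intro a b
  rw [conv_tmul f convUnit a b (ℛ R a) (ℛ R b)]
  conv_rhs => rw [← sum_counit_right_smul (ℛ R a), ← sum_counit_right_smul (ℛ R b)]
  rw [TensorProduct.sum_tmul]
  simp_rw [TensorProduct.tmul_sum]
  rw [map_sum]
  simp_rw [map_sum]
  refine Finset.sum_congr rfl fun i _ => Finset.sum_congr rfl fun p _ => ?_
  rw [convUnit_tmul, mul_smul_comm, mul_one, ← smul_tmul', tmul_smul, map_smul, map_smul,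
    smul_smul]

lemma conv_unit_left (g : A ⊗[R] A →ₗ[R] A) : conv convUnit g = g := by
  apply TensorProduct.ext'
  intro a b
  rw [conv_tmul convUnit g a b (ℛ R a) (ℛ R b)]
  conv_rhs => rw [← sum_counit_left_smul (ℛ R a), ← sum_counit_left_smul (ℛ R b)]
  rw [TensorProduct.sum_tmul]
  simp_rw [TensorProduct.tmul_sum]
  rw [map_sum]
  simp_rw [map_sum]
  refine Finset.sum_congr rfl fun i _ => Finset.sum_congr rfl fun p _ => ?_
  rw [convUnit_tmul, smul_mul_assoc, one_mul, ← smul_tmul', tmul_smul, map_smul, map_smul,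
    smul_smul]

lemma sum_sum_comm₄ {M : Type*} [AddCommMonoid M] {α β : Type*} {γ : α → Type*} {δ : β → Type*}
    (s : Finset α) (t : Finset β) (u : ∀ a, Finset (γ a)) (w : ∀ b, Finset (δ b))
    (F : ∀ (a : α) (b : β), γ a → δ b → M) :
    ∑ i ∈ s, ∑ p ∈ t, ∑ j ∈ u i, ∑ q ∈ w p, F i p j q
      = ∑ p ∈ t, ∑ q ∈ w p, ∑ i ∈ s, ∑ j ∈ u i, F i p j q := by
  rw [Finset.sum_comm]
  refine Finset.sum_congr rfl fun p _ => ?_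
  calc ∑ i ∈ s, ∑ j ∈ u i, ∑ q ∈ w p, F i p j q
      = ∑ i ∈ s, ∑ q ∈ w p, ∑ j ∈ u i, F i p j q :=
        Finset.sum_congr rfl fun i _ => Finset.sum_comm
    _ = ∑ q ∈ w p, ∑ i ∈ s, ∑ j ∈ u i, F i p j q := Finset.sum_comm

noncomputable def T6 (f g h : A ⊗[R] A →ₗ[R] A) :
    (A ⊗[R] (A ⊗[R] A)) ⊗[R] (A ⊗[R] (A ⊗[R] A)) →ₗ[R] A :=
  LinearMap.mul' R A ∘ₗ TensorProduct.map f (LinearMap.mul' R A ∘ₗ TensorProduct.map g h) ∘ₗ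
    LinearMap.lTensor (A ⊗[R] A) (tensorTensorTensorComm R A A A A).toLinearMap ∘ₗ
    (tensorTensorTensorComm R A (A ⊗[R] A) A (A ⊗[R] A)).toLinearMap

lemma T6_tmul (f g h : A ⊗[R] A →ₗ[R] A) (x₁ x₂ x₃ y₁ y₂ y₃ : A) :
    T6 f g h ((x₁ ⊗ₜ[R] (x₂ ⊗ₜ[R] x₃)) ⊗ₜ[R] (y₁ ⊗ₜ[R] (y₂ ⊗ₜ[R] y₃))) =
      f (x₁ ⊗ₜ[R] y₁) * (g (x₂ ⊗ₜ[R] y₂) * h (x₃ ⊗ₜ[R] y₃)) := by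
  simp [T6]

lemma conv_assoc (f g h : A ⊗[R] A →ₗ[R] A) :
    conv (conv f g) h = conv f (conv g h) := by
  apply TensorProduct.ext'
  intro a b
  have key := Coalgebra.sum_tmul_tmul_eq (R := R) (ℛ R a)
      (fun i => ℛ R ((ℛ R a).left i)) (fun i => ℛ R ((ℛ R a).right i))
  have keyb := Coalgebra.sum_tmul_tmul_eq (R := R) (ℛ R b)
      (fun i => ℛ R ((ℛ R b).left i)) (fun i => ℛ R ((ℛ R b).right i))
  have hT := congrArg (T6 f g h) (congrArg₂ (· ⊗ₜ[R] ·) key keyb)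
  simp only [TensorProduct.sum_tmul, TensorProduct.tmul_sum, map_sum, T6_tmul] at hT
  rw [conv_tmul (conv f g) h a b (ℛ R a) (ℛ R b),
    conv_tmul f (conv g h) a b (ℛ R a) (ℛ R b)]
  have L1 : ∑ i ∈ (ℛ R a).index, ∑ p ∈ (ℛ R b).index,
      conv f g ((ℛ R a).left i ⊗ₜ[R] (ℛ R b).left p) *
        h ((ℛ R a).right i ⊗ₜ[R] (ℛ R b).right p) =
      ∑ i ∈ (ℛ R a).index, ∑ p ∈ (ℛ R b).index,
        ∑ j ∈ (ℛ R ((ℛ R a).left i)).index, ∑ q ∈ (ℛ R ((ℛ R b).left p)).index,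
          f ((ℛ R ((ℛ R a).left i)).left j ⊗ₜ[R] (ℛ R ((ℛ R b).left p)).left q) *
            (g ((ℛ R ((ℛ R a).left i)).right j ⊗ₜ[R] (ℛ R ((ℛ R b).left p)).right q) *
              h ((ℛ R a).right i ⊗ₜ[R] (ℛ R b).right p)) := by
    refine Finset.sum_congr rfl fun i _ => Finset.sum_congr rfl fun p _ => ?_
    rw [conv_tmul f g _ _ (ℛ R ((ℛ R a).left i)) (ℛ R ((ℛ R b).left p)), Finset.sum_mul]
    refine Finset.sum_congr rfl fun j _ => ?_
    rw [Finset.sum_mul]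
    exact Finset.sum_congr rfl fun q _ => mul_assoc _ _ _
  have R1 : ∑ i ∈ (ℛ R a).index, ∑ p ∈ (ℛ R b).index,
      f ((ℛ R a).left i ⊗ₜ[R] (ℛ R b).left p) *
        conv g h ((ℛ R a).right i ⊗ₜ[R] (ℛ R b).right p) =
      ∑ i ∈ (ℛ R a).index, ∑ p ∈ (ℛ R b).index,
        ∑ j ∈ (ℛ R ((ℛ R a).right i)).index, ∑ q ∈ (ℛ R ((ℛ R b).right p)).index,
          f ((ℛ R a).left i ⊗ₜ[R] (ℛ R b).left p) *
            (g ((ℛ R ((ℛ R a).right i)).left j ⊗ₜ[R] (ℛ R ((ℛ R b).right p)).left q) *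
              h ((ℛ R ((ℛ R a).right i)).right j ⊗ₜ[R] (ℛ R ((ℛ R b).right p)).right q)) := by
    refine Finset.sum_congr rfl fun i _ => Finset.sum_congr rfl fun p _ => ?_
    rw [conv_tmul g h _ _ (ℛ R ((ℛ R a).right i)) (ℛ R ((ℛ R b).right p)), Finset.mul_sum]
    refine Finset.sum_congr rfl fun j _ => ?_
    rw [Finset.mul_sum]
  rw [L1, R1]
  rw [sum_sum_comm₄ (ℛ R a).index (ℛ R b).index
      (fun i => (ℛ R ((ℛ R a).left i)).index) (fun p => (ℛ R ((ℛ R b).left p)).index),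
    sum_sum_comm₄ (ℛ R a).index (ℛ R b).index
      (fun i => (ℛ R ((ℛ R a).right i)).index) (fun p => (ℛ R ((ℛ R b).right p)).index)]
  exact hT

/-- product of two representations: a representation of `a * b`. -/
noncomputable def mulRepr {ι κ : Type*} {a b : A} (ra : Coalgebra.Repr R a ι)
    (rb : Coalgebra.Repr R b κ) :
    Coalgebra.Repr R (a * b) (ι × κ) where
  index := ra.index ×ˢ rb.index
  left := fun ip => ra.left ip.1 * rb.left ip.2
  right := fun ip => ra.right ip.1 * rb.right ip.2
  eq := by
    rw [Bialgebra.comul_mul, ← ra.eq, ← rb.eq, Finset.sum_mul_sum, Finset.sum_product]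
    simp [Algebra.TensorProduct.tmul_mul_tmul]

end Conv

section Hopf
variable [HopfAlgebra R A]
open Coalgebra

lemma antipode_one' : HopfAlgebra.antipode (R := R) (1 : A) = 1 := by
  have h := HopfAlgebra.mul_antipode_rTensor_comul_apply (R := R) (A := A) (a := 1)
  rw [Bialgebra.comul_one, Algebra.TensorProduct.one_def] at h
  simpa using h

noncomputable def nu : A ⊗[R] A →ₗ[R] A :=
  LinearMap.mul' R A ∘ₗ
    TensorProduct.map (HopfAlgebra.antipode (R := R)) (HopfAlgebra.antipode (R := R)) ∘ₗ
    (TensorProduct.comm R A A).toLinearMap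

lemma nu_tmul (a b : A) :
    nu (a ⊗ₜ[R] b) = HopfAlgebra.antipode (R := R) b * HopfAlgebra.antipode (R := R) a := by
  simp [nu]

lemma conv_Sm_m :
    conv ((HopfAlgebra.antipode (R := R)) ∘ₗ LinearMap.mul' R A) (LinearMap.mul' R A)
      = (convUnit : A ⊗[R] A →ₗ[R] A) := by
  apply TensorProduct.ext'
  intro a b
  rw [conv_tmul _ _ a b (ℛ R a) (ℛ R b), convUnit_tmul]
  have h := HopfAlgebra.sum_antipode_mul_eq_smul (R := R) (mulRepr (ℛ R a) (ℛ R b))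
  rw [Bialgebra.counit_mul] at h
  rw [← h]
  rw [mulRepr, Finset.sum_product]
  simp

lemma conv_m_nu :
    conv (LinearMap.mul' R A) (nu : A ⊗[R] A →ₗ[R] A) = convUnit := by
  apply TensorProduct.ext'
  intro a b
  rw [conv_tmul _ _ a b (ℛ R a) (ℛ R b), convUnit_tmul]
  have key : ∀ i ∈ (ℛ R a).index,
      ∑ p ∈ (ℛ R b).index,
        LinearMap.mul' R A ((ℛ R a).left i ⊗ₜ[R] (ℛ R b).left p) *
          nu ((ℛ R a).right i ⊗ₜ[R] (ℛ R b).right p)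
      = counit (R := R) b • ((ℛ R a).left i * HopfAlgebra.antipode (R := R) ((ℛ R a).right i)) := by
    intro i _
    have hb := HopfAlgebra.sum_mul_antipode_eq_smul (R := R) (ℛ R b)
    calc ∑ p ∈ (ℛ R b).index,
        LinearMap.mul' R A ((ℛ R a).left i ⊗ₜ[R] (ℛ R b).left p) *
          nu ((ℛ R a).right i ⊗ₜ[R] (ℛ R b).right p)
        = ∑ p ∈ (ℛ R b).index, (ℛ R a).left i *
            ((ℛ R b).left p * HopfAlgebra.antipode (R := R) ((ℛ R b).right p)) *
            HopfAlgebra.antipode (R := R) ((ℛ R a).right i) := by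
          refine Finset.sum_congr rfl fun p _ => ?_
          rw [LinearMap.mul'_apply, nu_tmul]
          noncomm_ring
      _ = (ℛ R a).left i * (∑ p ∈ (ℛ R b).index,
            (ℛ R b).left p * HopfAlgebra.antipode (R := R) ((ℛ R b).right p)) *
            HopfAlgebra.antipode (R := R) ((ℛ R a).right i) := by
          rw [Finset.mul_sum, Finset.sum_mul]
      _ = _ := by rw [hb]; rw [mul_smul_comm, smul_mul_assoc, mul_one]
  rw [Finset.sum_congr rfl key]
  rw [← Finset.smul_sum, HopfAlgebra.sum_mul_antipode_eq_smul (R := R) (ℛ R a), smul_smul,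
    mul_comm]

lemma antipode_mul_rev (a b : A) :
    HopfAlgebra.antipode (R := R) (a * b)
      = HopfAlgebra.antipode (R := R) b * HopfAlgebra.antipode (R := R) a := by
  have e1 : (HopfAlgebra.antipode (R := R)) ∘ₗ LinearMap.mul' R A = (nu : A ⊗[R] A →ₗ[R] A) := by
    calc (HopfAlgebra.antipode (R := R)) ∘ₗ LinearMap.mul' R A
        = conv ((HopfAlgebra.antipode (R := R)) ∘ₗ LinearMap.mul' R A) convUnit :=
          (conv_unit_right _).symm
      _ = conv ((HopfAlgebra.antipode (R := R)) ∘ₗ LinearMap.mul' R A)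
            (conv (LinearMap.mul' R A) nu) := by rw [conv_m_nu]
      _ = conv (conv ((HopfAlgebra.antipode (R := R)) ∘ₗ LinearMap.mul' R A)
            (LinearMap.mul' R A)) nu := (conv_assoc _ _ _).symm
      _ = conv convUnit nu := by rw [conv_Sm_m]
      _ = nu := conv_unit_left _
  have := congrArg (fun F : A ⊗[R] A →ₗ[R] A => F (a ⊗ₜ[R] b)) e1
  simpa [nu_tmul] using this

end Hopf

section Main

variable {k U : Type*} [Field k] [Ring U] [HopfAlgebra k U]
variable {V W : Type*} [AddCommGroup V] [Module k V] [FiniteDimensional k V]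
  [AddCommGroup W] [Module k W]
variable (Φ : U →ₗ[k] (W →ₗ[k] V)) (Ψ : U →ₗ[k] (V →ₗ[k] W)) (K : U)

/-- the trace functional `u ⊗ v ↦ tr(Φ(u) ∘ Ψ(S(v)K))`. -/
noncomputable def G : U ⊗[k] U →ₗ[k] k :=
  (LinearMap.trace k V) ∘ₗ
    (TensorProduct.lift (LinearMap.llcomp k V W V)) ∘ₗ
    (TensorProduct.map Φ
      (Ψ ∘ₗ (LinearMap.mulRight k K) ∘ₗ HopfAlgebra.antipode (R := k)))

lemma G_tmul (u v : U) :
    G Φ Ψ K (u ⊗ₜ[k] v) = (LinearMap.trace k V)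
      ((Φ u) ∘ₗ (Ψ (HopfAlgebra.antipode (R := k) v * K))) := by
  simp [G]
  rfl

/-- `u ⊗ (a ⊗ v) ↦ tr(Φ(u) ∘ Ψ(a S(v) K))`. -/
noncomputable def GA : U ⊗[k] (U ⊗[k] U) →ₗ[k] k :=
  (LinearMap.trace k V) ∘ₗ
    (TensorProduct.lift (LinearMap.llcomp k V W V)) ∘ₗ
    (TensorProduct.map Φ
      (Ψ ∘ₗ (LinearMap.mulRight k K) ∘ₗ LinearMap.mul' k U ∘ₗ
        LinearMap.lTensor U (HopfAlgebra.antipode (R := k))))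

lemma GA_tmul (u a v : U) :
    GA Φ Ψ K (u ⊗ₜ[k] (a ⊗ₜ[k] v)) = (LinearMap.trace k V)
      ((Φ u) ∘ₗ (Ψ (a * HopfAlgebra.antipode (R := k) v * K))) := by
  simp [GA, mul_assoc]
  rfl

/-- `u ⊗ (v ⊗ a) ↦ tr(Φ(u) ∘ Ψ(S(v) S(a) K))`. -/
noncomputable def GB : U ⊗[k] (U ⊗[k] U) →ₗ[k] k :=
  (LinearMap.trace k V) ∘ₗ
    (TensorProduct.lift (LinearMap.llcomp k V W V)) ∘ₗ
    (TensorProduct.map Φ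
      (Ψ ∘ₗ (LinearMap.mulRight k K) ∘ₗ LinearMap.mul' k U ∘ₗ
        TensorProduct.map (HopfAlgebra.antipode (R := k)) (HopfAlgebra.antipode (R := k))))

lemma GB_tmul (u v a : U) :
    GB Φ Ψ K (u ⊗ₜ[k] (v ⊗ₜ[k] a)) = (LinearMap.trace k V)
      ((Φ u) ∘ₗ (Ψ (HopfAlgebra.antipode (R := k) v * HopfAlgebra.antipode (R := k) a * K))) := by
  simp [GB, mul_assoc]
  rfl

variable (B B' : Subalgebra k U)
variable (ρV : B →ₐ[k] Module.End k V) (ρW : B' →ₐ[k] Module.End k W)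

/-- `c ⊗ w ↦ c · S(w)` on `B' ⊗ U`. -/
noncomputable def Pmap : (Subalgebra.toSubmodule B' : Submodule k U) ⊗[k] U →ₗ[k] U :=
  LinearMap.mul' k U ∘ₗ
    TensorProduct.map (Subalgebra.toSubmodule B').subtype (HopfAlgebra.antipode (R := k))

/-- `c ⊗ w ↦ S(c) · w` on `B ⊗ U`. -/
noncomputable def Qmap : (Subalgebra.toSubmodule B : Submodule k U) ⊗[k] U →ₗ[k] U :=
  LinearMap.mul' k U ∘ₗ
    TensorProduct.map (HopfAlgebra.antipode (R := k) ∘ₗ (Subalgebra.toSubmodule B).subtype)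
      LinearMap.id

lemma lemA
    (hPhi : ∀ (b : B) (x : U) (b' : B'),
      Φ ((b : U) * x * (b' : U)) = (ρV b) ∘ₗ (Φ x) ∘ₗ (ρW b'))
    (hPsi : ∀ (b' : B') (x : U) (b : B),
      Ψ ((b' : U) * x * (b : U)) = (ρW b') ∘ₗ (Ψ x) ∘ₗ (ρV b))
    (t : (Subalgebra.toSubmodule B' : Submodule k U) ⊗[k] U) (z : U ⊗[k] U) :
    G Φ Ψ K (z * LinearMap.rTensor U (Subalgebra.toSubmodule B').subtype t) =
      GA Φ Ψ K ((LinearMap.lTensor U (TensorProduct.comm k U U).toLinearMap)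
        ((TensorProduct.assoc k U U U).toLinearMap (z ⊗ₜ[k] Pmap B' t))) := by
  induction t using TensorProduct.induction_on with
  | zero => simp only [map_zero, mul_zero, TensorProduct.tmul_zero]
  | add t1 t2 h1 h2 => simp only [map_add, mul_add, TensorProduct.tmul_add, h1, h2]
  | tmul c w =>
    induction z using TensorProduct.induction_on with
    | zero => simp only [map_zero, zero_mul, TensorProduct.zero_tmul]
    | add z1 z2 h1 h2 => simp only [map_add, add_mul, TensorProduct.add_tmul, h1, h2]
    | tmul u v =>
      set S := HopfAlgebra.antipode (R := k) (A := U) with hSdef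
      have hrt : LinearMap.rTensor U (Subalgebra.toSubmodule B').subtype (c ⊗ₜ[k] w)
          = (c : U) ⊗ₜ[k] w := rfl
      have hP : Pmap B' (c ⊗ₜ[k] w) = (c : U) * S w := by simp [Pmap, hSdef]
      set cB : B' := ⟨(c : U), c.2⟩ with hcB
      have hcc : (cB : U) = (c : U) := rfl
      have h1 : Φ (u * (c : U)) = (Φ u) ∘ₗ (ρW cB) := by
        have := hPhi 1 u cB
        simpa [hcc, Module.End.one_eq_id] using this
      have h2 : S (v * w) = S w * S v := antipode_mul_rev v w
      have h3 : ∀ y : U, Ψ ((c : U) * y) = (ρW cB) ∘ₗ Ψ y := by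
        intro y
        have := hPsi cB y 1
        simpa [hcc, Module.End.one_eq_id] using this
      rw [hrt, hP, Algebra.TensorProduct.tmul_mul_tmul, G_tmul, h1, h2]
      have h4 : (Φ u ∘ₗ ρW cB) ∘ₗ Ψ (S w * S v * K)
          = Φ u ∘ₗ Ψ ((c : U) * (S w * S v * K)) := by
        rw [h3, LinearMap.comp_assoc]
      rw [h4]
      simp only [LinearEquiv.coe_toLinearMap, TensorProduct.assoc_tmul,
        LinearMap.lTensor_tmul, TensorProduct.comm_tmul, GA_tmul, mul_assoc, ← hSdef]

lemma lemB (Kinv : U) (hK2 : Kinv * K = 1)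
    (hS2 : ∀ x : U,
      HopfAlgebra.antipode (R := k) (HopfAlgebra.antipode (R := k) x) = K * x * Kinv)
    (hPhi : ∀ (b : B) (x : U) (b' : B'),
      Φ ((b : U) * x * (b' : U)) = (ρV b) ∘ₗ (Φ x) ∘ₗ (ρW b'))
    (hPsi : ∀ (b' : B') (x : U) (b : B),
      Ψ ((b' : U) * x * (b : U)) = (ρW b') ∘ₗ (Ψ x) ∘ₗ (ρV b))
    (t : (Subalgebra.toSubmodule B : Submodule k U) ⊗[k] U) (z : U ⊗[k] U) :
    G Φ Ψ K (LinearMap.rTensor U (Subalgebra.toSubmodule B).subtype t * z) =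
      GB Φ Ψ K ((TensorProduct.assoc k U U U).toLinearMap (z ⊗ₜ[k] Qmap B t)) := by
  induction t using TensorProduct.induction_on with
  | zero => simp only [map_zero, zero_mul, TensorProduct.tmul_zero]
  | add t1 t2 h1 h2 => simp only [map_add, add_mul, TensorProduct.tmul_add, h1, h2]
  | tmul c w =>
    induction z using TensorProduct.induction_on with
    | zero => simp only [map_zero, mul_zero, TensorProduct.zero_tmul]
    | add z1 z2 h1 h2 => simp only [map_add, mul_add, TensorProduct.add_tmul, h1, h2]
    | tmul u v =>
      set S := HopfAlgebra.antipode (R := k) (A := U) with hSdef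
      have hrt : LinearMap.rTensor U (Subalgebra.toSubmodule B).subtype (c ⊗ₜ[k] w)
          = (c : U) ⊗ₜ[k] w := rfl
      have hQ : Qmap B (c ⊗ₜ[k] w) = S (c : U) * w := by simp [Qmap, hSdef]
      set cB : B := ⟨(c : U), c.2⟩ with hcB
      have hcc : (cB : U) = (c : U) := rfl
      have h1 : Φ ((c : U) * u) = (ρV cB) ∘ₗ (Φ u) := by
        have := hPhi cB u 1
        simpa [hcc, Module.End.one_eq_id] using this
      have h2 : S (w * v) = S v * S w := antipode_mul_rev w v
      have h3 : ∀ y : U, Ψ (y * (c : U)) = Ψ y ∘ₗ (ρV cB) := by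
        intro y
        have := hPsi 1 y cB
        simpa [hcc, Module.End.one_eq_id] using this
      rw [hrt, hQ, Algebra.TensorProduct.tmul_mul_tmul, G_tmul, h1, h2]
      have h5 : (LinearMap.trace k V) ((ρV cB ∘ₗ Φ u) ∘ₗ Ψ (S v * S w * K))
          = (LinearMap.trace k V) (Φ u ∘ₗ Ψ (S v * S w * K * (c : U))) := by
        rw [LinearMap.comp_assoc, ← Module.End.mul_eq_comp (ρV cB), LinearMap.trace_mul_comm,
          Module.End.mul_eq_comp, LinearMap.comp_assoc, ← h3]
      rw [h5]
      simp only [LinearEquiv.coe_toLinearMap, TensorProduct.assoc_tmul, GB_tmul, ← hSdef]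
      have hKc : S (S (c : U)) * K = K * (c : U) := by
        rw [hS2, mul_assoc, hK2, mul_one]
      have h6 : S (S (c : U) * w) = S w * S (S (c : U)) := antipode_mul_rev _ _
      rw [h6]
      simp only [mul_assoc, hKc]

end Main
end XiAux


/-- Let `K` be an invertible grouplike element implementing `S²` by
conjugation. If `Φ ∈ E^{V,W}` and `Ψ ∈ E^{W,V}` are matrix-spherical functions, then
`Ξ(Φ, Ψ)` is a zonal spherical function for `(B, B')`. -/
theorem XiPairing_is_zonal_spherical
    (k U : Type*) [Field k] [Ring U] [HopfAlgebra k U]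
    (K Kinv : U) (hK1 : K * Kinv = 1) (hK2 : Kinv * K = 1)
    (hKgrouplike : Coalgebra.comul (R := k) K = K ⊗ₜ[k] K)
    (hS2 : ∀ x : U,
      HopfAlgebra.antipode (R := k) (HopfAlgebra.antipode (R := k) x) = K * x * Kinv)
    (B B' : Subalgebra k U)
    (hB : IsRightCoidealSubalgebra k B) (hB' : IsRightCoidealSubalgebra k B')
    (V W : Type*) [AddCommGroup V] [Module k V] [FiniteDimensional k V]
    [AddCommGroup W] [Module k W]
    (ρV : B →ₐ[k] Module.End k V) (ρW : B' →ₐ[k] Module.End k W)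
    (Φ : U →ₗ[k] (W →ₗ[k] V))
    (hΦ : ∀ (b : B) (x : U) (b' : B'),
      Φ ((b : U) * x * (b' : U)) = (ρV b) ∘ₗ (Φ x) ∘ₗ (ρW b'))
    (Ψ : U →ₗ[k] (V →ₗ[k] W))
    (hΨ : ∀ (b' : B') (x : U) (b : B),
      Ψ ((b' : U) * x * (b : U)) = (ρW b') ∘ₗ (Ψ x) ∘ₗ (ρV b)) :
    ∀ (b : B) (x : U) (b' : B'),
      XiPairing Φ Ψ K ((b : U) * x * (b' : U)) =
        Coalgebra.counit (R := k) (b : U) * XiPairing Φ Ψ K x *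
          Coalgebra.counit (R := k) (b' : U) := by
  intro b x b'
  obtain ⟨t', ht'⟩ := hB' (b' : U) b'.2
  obtain ⟨t, ht⟩ := hB (b : U) b.2
  have hXi : ∀ y : U, XiPairing Φ Ψ K y = XiAux.G Φ Ψ K (Coalgebra.comul (R := k) y) :=
    fun y => rfl
  have hGA1 : ∀ z : U ⊗[k] U,
      XiAux.GA Φ Ψ K ((LinearMap.lTensor U (TensorProduct.comm k U U).toLinearMap)
        ((TensorProduct.assoc k U U U).toLinearMap (z ⊗ₜ[k] (1 : U)))) = XiAux.G Φ Ψ K z := by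
    intro z
    induction z using TensorProduct.induction_on with
    | zero => simp only [TensorProduct.zero_tmul, map_zero]
    | add z1 z2 h1 h2 => simp only [TensorProduct.add_tmul, map_add, h1, h2]
    | tmul u v =>
      simp only [LinearEquiv.coe_toLinearMap, TensorProduct.assoc_tmul,
        LinearMap.lTensor_tmul, TensorProduct.comm_tmul, XiAux.GA_tmul, XiAux.G_tmul, one_mul]
  have hGB1 : ∀ z : U ⊗[k] U,
      XiAux.GB Φ Ψ K ((TensorProduct.assoc k U U U).toLinearMap (z ⊗ₜ[k] (1 : U)))
        = XiAux.G Φ Ψ K z := by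
    intro z
    induction z using TensorProduct.induction_on with
    | zero => simp only [TensorProduct.zero_tmul, map_zero]
    | add z1 z2 h1 h2 => simp only [TensorProduct.add_tmul, map_add, h1, h2]
    | tmul u v =>
      simp only [LinearEquiv.coe_toLinearMap, TensorProduct.assoc_tmul, XiAux.GB_tmul,
        XiAux.antipode_one', mul_one, XiAux.G_tmul]
  have hP : XiAux.Pmap B' t' = Coalgebra.counit (R := k) ((b' : U)) • (1 : U) := by
    have hmap : TensorProduct.map (Subalgebra.toSubmodule B').subtype
        (HopfAlgebra.antipode (R := k)) t'
        = LinearMap.lTensor U (HopfAlgebra.antipode (R := k))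
            (LinearMap.rTensor U (Subalgebra.toSubmodule B').subtype t') := by
      rw [← LinearMap.comp_apply, LinearMap.lTensor_comp_rTensor]
    rw [XiAux.Pmap, LinearMap.comp_apply, hmap, ht',
      HopfAlgebra.mul_antipode_lTensor_comul_apply, Algebra.algebraMap_eq_smul_one]
  have hQ : XiAux.Qmap B t = Coalgebra.counit (R := k) ((b : U)) • (1 : U) := by
    have hmap : TensorProduct.map
        ((HopfAlgebra.antipode (R := k)) ∘ₗ (Subalgebra.toSubmodule B).subtype)
        (LinearMap.id (R := k) (M := U)) t
        = LinearMap.rTensor U (HopfAlgebra.antipode (R := k))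
            (LinearMap.rTensor U (Subalgebra.toSubmodule B).subtype t) := by
      rw [← LinearMap.comp_apply, ← LinearMap.rTensor_comp]
      rfl
    rw [XiAux.Qmap, LinearMap.comp_apply, hmap, ht,
      HopfAlgebra.mul_antipode_rTensor_comul_apply, Algebra.algebraMap_eq_smul_one]
  rw [hXi, Bialgebra.comul_mul, Bialgebra.comul_mul, ← ht',
    XiAux.lemA Φ Ψ K B B' ρV ρW hΦ hΨ t' (Coalgebra.comul (R := k) (b : U) *
      Coalgebra.comul (R := k) x),
    hP, TensorProduct.tmul_smul, map_smul, map_smul, map_smul, hGA1, ← ht,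
    XiAux.lemB Φ Ψ K B B' ρV ρW Kinv hK2 hS2 hΦ hΨ t (Coalgebra.comul (R := k) x),
    hQ, TensorProduct.tmul_smul, map_smul, map_smul, hGB1, hXi x]
  rw [smul_eq_mul, smul_eq_mul]
  ring
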